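/- arXiv:2412.10612 — 3 statements merged into one kernel-verified Lean document; each statement's English description precedes it below -/
import Mathlib

section
/- If a kernel mechanism satisfies ε₀-DP (pure), then the privacy-boosted mechanism with data-independent preferred region and boosting rate q satisfies (ε₀ - 2·log(1-q))-DP. -/
open MeasureTheory Set
open scoped Classical

theorem aux6 (a b D c : ℝ) (hD : 0 < D) (h : a ≤ c * b) : a / D ≤ c * (b / D) := by
  rw [mul_div_assoc']; gcongr

theorem stmt_6 (fX fX' : ℝ → ℝ) (SX SX' : Set ℝ) (ε₀ pbar q : ℝ)
    (hfX : ∀ y, 0 ≤ fX y) (hfX' : ∀ y, 0 ≤ fX' y)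
    (hdp : ∀ y, fX y ≤ Real.exp ε₀ * fX' y)
    (h1 : ∫ y in SXᶜ, fX y = pbar) (h2 : ∫ y in SX'ᶜ, fX' y = pbar)
    (hpbar0 : 0 ≤ pbar) (hpbar1 : pbar ≤ 1)
    (hq0 : 0 ≤ q) (hq1 : q < 1) :
    ∀ y, (if y ∈ SX then fX y / (1 - pbar * q) else fX y * (1 - q) / (1 - pbar * q))
      ≤ Real.exp (ε₀ - 2 * Real.log (1 - q)) *
        (if y ∈ SX' then fX' y / (1 - pbar * q)
         else fX' y * (1 - q) / (1 - pbar * q)) := by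
  intro y
  have h1q : (0:ℝ) < 1 - q := by linarith
  have hD : (0:ℝ) < 1 - pbar * q := by nlinarith
  have hE : Real.exp (ε₀ - 2 * Real.log (1 - q)) = Real.exp ε₀ / (1 - q) ^ 2 := by
    rw [Real.exp_sub, two_mul, Real.exp_add, Real.exp_log h1q]; ring
  have h := hdp y
  have hf' := hfX' y
  have hep := (Real.exp_pos ε₀).le
  rw [hE]
  split_ifs <;>
    refine aux6 _ _ _ _ hD ?_ <;>
    rw [div_mul_eq_mul_div, le_div_iff₀ (by positivity : (0:ℝ) < (1-q)^2)] <;>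
    nlinarith [h, hfX y, mul_le_mul_of_nonneg_right h h1q.le,
      mul_le_mul_of_nonneg_right h (mul_nonneg h1q.le h1q.le),
      mul_nonneg (mul_nonneg hep hf') hq0, mul_nonneg (hfX y) hq0,
      mul_nonneg (mul_nonneg (hfX y) hq0) hq0, sq_nonneg (1-q)]
end

section
/- For a fixed (data-independent) preferred output region S common to all datasets, the boosted mechanism's log-likelihood ratio equals the kernel log-likelihood ratio plus the constant L₁ = log((1-p̄'q)/(1-p̄q)), where p̄, p̄' are the kernel tail masses of S under the two neighboring datasets; in particular, if the kernel is (ε₀)-DP then the boosted mechanism is (ε₀ + |L₁|)-DP. -/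
open scoped Classical

/-! Boosting multiplies the kernel density by a weight depending only on `y` and `S`
(`1` on `S`, `1 - q` off it), then renormalises. The weight is the same for both datasets, so it
cancels in the likelihood ratio and only the ratio of the normalising constants survives. -/

namespace Real

theorem le_exp_mul_iff_log_div_le {a b t : ℝ} (ha : 0 < a) (hb : 0 < b) :
    a ≤ exp t * b ↔ log (a / b) ≤ t := by
  rw [log_le_iff_le_exp (div_pos ha hb), div_le_iff₀ hb]

theorem mul_div_div_mul_div_eq (a b w Z Z' : ℝ) (hw : w ≠ 0) :
    a * w / Z / (b * w / Z') = a / b * (Z' / Z) := by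
  rw [div_div_div_comm, mul_div_mul_right _ _ hw, div_div_eq_mul_div, mul_div_assoc]

theorem log_mul_div_div_mul_div {a b w Z Z' : ℝ} (ha : 0 < a) (hb : 0 < b) (hw : w ≠ 0)
    (hZ : 0 < Z) (hZ' : 0 < Z') :
    log (a * w / Z / (b * w / Z')) = log (a / b) + log (Z' / Z) := by
  rw [mul_div_div_mul_div_eq _ _ _ _ _ hw,
    log_mul (div_pos ha hb).ne' (div_pos hZ' hZ).ne']

theorem mul_div_le_exp_mul_mul_div {a b w Z Z' ε : ℝ} (ha : 0 < a) (hb : 0 < b) (hw : 0 < w)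
    (hZ : 0 < Z) (hZ' : 0 < Z') (h : a ≤ exp ε * b) :
    a * w / Z ≤ exp (ε + |log (Z' / Z)|) * (b * w / Z') := by
  rw [le_exp_mul_iff_log_div_le (by positivity) (by positivity),
    log_mul_div_div_mul_div ha hb hw.ne' hZ hZ']
  have hf : log (a / b) ≤ ε := (le_exp_mul_iff_log_div_le ha hb).1 h
  linarith [le_abs_self (log (Z' / Z))]

end Real

theorem stmt_7_general (fX fX' : ℝ → ℝ) (S : Set ℝ) (pbar pbar' q ε₀ L₁ : ℝ)
    (hfX : ∀ y, 0 < fX y) (hfX' : ∀ y, 0 < fX' y)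
    (hq1 : q < 1)
    (hpos : 0 < 1 - pbar * q) (hpos' : 0 < 1 - pbar' * q)
    (hL₁ : L₁ = Real.log ((1 - pbar' * q) / (1 - pbar * q)))
    (gX gX' : ℝ → ℝ)
    (hgX : ∀ y, gX y =
      if y ∈ S then fX y / (1 - pbar * q) else fX y * (1 - q) / (1 - pbar * q))
    (hgX' : ∀ y, gX' y =
      if y ∈ S then fX' y / (1 - pbar' * q) else fX' y * (1 - q) / (1 - pbar' * q)) :
    (∀ y, Real.log (gX y / gX' y) = Real.log (fX y / fX' y) + L₁) ∧
    ((∀ y, fX y ≤ Real.exp ε₀ * fX' y) →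
      ∀ y, gX y ≤ Real.exp (ε₀ + |L₁|) * gX' y) := by
  set w : ℝ → ℝ := fun y ↦ if y ∈ S then 1 else 1 - q
  have hw : ∀ y, 0 < w y := fun y ↦ by
    by_cases hy : y ∈ S <;> simp only [w, hy, if_true, if_false] <;> linarith
  have hgX_w : ∀ y, gX y = fX y * w y / (1 - pbar * q) := fun y ↦ by
    rw [hgX]; split_ifs <;> simp [w, *]
  have hgX'_w : ∀ y, gX' y = fX' y * w y / (1 - pbar' * q) := fun y ↦ by
    rw [hgX']; split_ifs <;> simp [w, *]
  subst hL₁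
  refine ⟨fun y ↦ ?_, fun hdp y ↦ ?_⟩
  · rw [hgX_w, hgX'_w]
    exact Real.log_mul_div_div_mul_div (hfX y) (hfX' y) (hw y).ne' hpos hpos'
  · rw [hgX_w, hgX'_w]
    exact Real.mul_div_le_exp_mul_mul_div (hfX y) (hfX' y) (hw y) hpos hpos' (hdp y)

theorem stmt_7 (fX fX' : ℝ → ℝ) (S : Set ℝ) (pbar pbar' q ε₀ L₁ : ℝ)
    (hfX : ∀ y, 0 < fX y) (hfX' : ∀ y, 0 < fX' y)
    (h1 : ∫ y in Sᶜ, fX y = pbar) (h2 : ∫ y in Sᶜ, fX' y = pbar')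
    (hq0 : 0 ≤ q) (hq1 : q < 1)
    (hpos : 0 < 1 - pbar * q) (hpos' : 0 < 1 - pbar' * q)
    (hL₁ : L₁ = Real.log ((1 - pbar' * q) / (1 - pbar * q)))
    (gX gX' : ℝ → ℝ)
    (hgX : ∀ y, gX y =
      if y ∈ S then fX y / (1 - pbar * q) else fX y * (1 - q) / (1 - pbar * q))
    (hgX' : ∀ y, gX' y =
      if y ∈ S then fX' y / (1 - pbar' * q) else fX' y * (1 - q) / (1 - pbar' * q)) :
    (∀ y, Real.log (gX y / gX' y) = Real.log (fX y / fX' y) + L₁) ∧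
    ((∀ y, fX y ≤ Real.exp ε₀ * fX' y) →
      ∀ y, gX y ≤ Real.exp (ε₀ + |L₁|) * gX' y) :=
  stmt_7_general fX fX' S pbar pbar' q ε₀ L₁ hfX hfX' hq1 hpos hpos' hL₁ gX gX' hgX hgX'
end

section
/- The value-frequency estimator of PB-GRR is unbiased: with F_x users holding value x (all within category S containing F_S users), each report equals x with probability p if truth is x, p_s if truth is in S but ≠ x, and p_s̄ if truth is outside S, the estimator F̂_x = (C_x - F̂_S(p_s - p_s̄) - N·p_s̄)/(p - p_s) satisfies E[F̂_x] = F_x, given E[F̂_S] = F_S and p ≠ p_s. -/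
/-!
The number `C_x` of reports equal to `x` is a sum of indicators, so its expectation is the sum of
the report probabilities. Each user contributes
`p_s̄ + (p_s - p_s̄)·[truth ∈ S] + (p - p_s)·[truth = x]`, hence `E[C_x] = N p_s̄ + (p_s - p_s̄) F_S +
(p - p_s) F_x`. The estimator is affine in `C_x` and `F̂_S`, so substituting `E[F̂_S] = F_S` leaves
exactly `F_x`.
-/

open MeasureTheory ProbabilityTheory Finset

section CountingEvents

variable {Ω ι : Type*} [Fintype ι] {R : ι → Ω → Bool}

theorem natCast_card_filter_eq_sum_indicator (ω : Ω) :
    (#{i | R i ω = true} : ℝ) = ∑ i, {ω | R i ω = true}.indicator 1 ω := by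
  rw [natCast_card_filter]
  simp only [Set.indicator_apply, Set.mem_ofPred_eq, Pi.one_apply]

variable [MeasurableSpace Ω] {μ : Measure Ω}

theorem integrable_card_filter [IsFiniteMeasure μ] (hR : ∀ i, Measurable (R i)) :
    Integrable (fun ω => (#{i | R i ω = true} : ℝ)) μ := by
  simp_rw [natCast_card_filter_eq_sum_indicator]
  exact integrable_finsetSum _ fun i _ =>
    (integrable_const 1).indicator (hR i (measurableSet_singleton true))

theorem integral_card_filter [IsFiniteMeasure μ] (hR : ∀ i, Measurable (R i)) :
    ∫ ω, (#{i | R i ω = true} : ℝ) ∂μ = ∑ i, μ.real {ω | R i ω = true} := by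
  have hE : ∀ i, MeasurableSet {ω | R i ω = true} := fun i => hR i (measurableSet_singleton true)
  simp_rw [natCast_card_filter_eq_sum_indicator]
  rw [integral_finsetSum _ fun i _ => (integrable_const 1).indicator (hE i)]
  exact sum_congr rfl fun i _ => integral_indicator_one (hE i)

end CountingEvents

theorem sum_ite_ite_eq_of_imp {ι : Type*} [Fintype ι] (P Q : ι → Prop) [DecidablePred P]
    [DecidablePred Q] (hPQ : ∀ i, P i → Q i) (p ps psb : ℝ) :
    ∑ i, (if P i then p else if Q i then ps else psb)
      = Fintype.card ι * psb + (ps - psb) * #{i | Q i} + (p - ps) * #{i | P i} := by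
  have hpoint : ∀ i, (if P i then p else if Q i then ps else psb)
      = psb + (ps - psb) * (if Q i then 1 else 0) + (p - ps) * (if P i then 1 else 0) := by
    intro i
    by_cases hP : P i
    · simp [hP, hPQ i hP]
    · by_cases hQ : Q i <;> simp [hP, hQ]
  simp only [hpoint, sum_add_distrib, ← mul_sum, sum_boole, sum_const, card_univ, nsmul_eq_mul]

theorem stmt_16_general {Ω : Type*} [MeasureSpace Ω] [IsProbabilityMeasure (ℙ : Measure Ω)]
    (N : ℕ) (t : Fin N → Fin 3) (R : Fin N → Ω → Bool) (FhatS : Ω → ℝ)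
    (p ps psb : ℝ) (hpps : p ≠ ps)
    (hp0 : 0 ≤ p) (hps0 : 0 ≤ ps)
    (hpsb0 : 0 ≤ psb)
    (hmeas : ∀ i, Measurable (R i))
    (hprob : ∀ i, ℙ {ω | R i ω = true}
      = ENNReal.ofReal (if t i = 0 then p else if t i = 1 then ps else psb))
    (hFS_int : Integrable FhatS)
    (hFS : ∫ ω, FhatS ω
      = ((Finset.univ.filter (fun i => t i = 0 ∨ t i = 1)).card : ℝ)) :
    ∫ ω, ((((Finset.univ.filter (fun i => R i ω = true)).card : ℝ)
          - FhatS ω * (ps - psb) - N * psb) / (p - ps))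
      = ((Finset.univ.filter (fun i => t i = 0)).card : ℝ) := by
  have hreport : ∀ i, (ℙ : Measure Ω).real {ω | R i ω = true}
      = if t i = 0 then p else if t i = 0 ∨ t i = 1 then ps else psb := by
    intro i
    rw [measureReal_def, hprob i, ENNReal.toReal_ofReal (by split_ifs <;> assumption)]
    by_cases h0 : t i = 0 <;> simp [h0]
  have hcount : ∫ ω, (#{i | R i ω = true} : ℝ)
      = N * psb + (ps - psb) * #{i | t i = 0 ∨ t i = 1} + (p - ps) * #{i | t i = 0} := by
    rw [integral_card_filter hmeas, sum_congr rfl fun i _ => hreport i,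
      sum_ite_ite_eq_of_imp _ _ (fun _ => Or.inl), Fintype.card_fin]
  have hCint := integrable_card_filter (μ := ℙ) hmeas
  have hFSint : Integrable fun ω => FhatS ω * (ps - psb) := hFS_int.mul_const _
  have hdiff : Integrable fun ω => (#{i | R i ω = true} : ℝ) - FhatS ω * (ps - psb) :=
    hCint.sub hFSint
  rw [integral_div, integral_sub hdiff (integrable_const _), integral_sub hCint hFSint, integral_mul_const, integral_const, hcount, hFS,
    probReal_univ, one_smul]
  field_simp [sub_ne_zero.mpr hpps]
  ring

theorem stmt_16 {Ω : Type*} [MeasureSpace Ω] [IsProbabilityMeasure (ℙ : Measure Ω)]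
    (N : ℕ) (t : Fin N → Fin 3) (R : Fin N → Ω → Bool) (FhatS : Ω → ℝ)
    (p ps psb : ℝ) (hpps : p ≠ ps)
    (hp0 : 0 ≤ p) (hp1 : p ≤ 1) (hps0 : 0 ≤ ps) (hps1 : ps ≤ 1)
    (hpsb0 : 0 ≤ psb) (hpsb1 : psb ≤ 1)
    (hmeas : ∀ i, Measurable (R i))
    (hprob : ∀ i, ℙ {ω | R i ω = true}
      = ENNReal.ofReal (if t i = 0 then p else if t i = 1 then ps else psb))
    (hFS_int : Integrable FhatS)
    (hFS : ∫ ω, FhatS ω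
      = ((Finset.univ.filter (fun i => t i = 0 ∨ t i = 1)).card : ℝ)) :
    ∫ ω, ((((Finset.univ.filter (fun i => R i ω = true)).card : ℝ)
          - FhatS ω * (ps - psb) - N * psb) / (p - ps))
      = ((Finset.univ.filter (fun i => t i = 0)).card : ℝ) :=
  stmt_16_general N t R FhatS p ps psb hpps hp0 hps0 hpsb0 hmeas hprob hFS_int hFS
end
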